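/- Let P be a finite set with |P| = N, and suppose demand pairs are selected one at a time uniformly at random without replacement from P. Fix a pair (u,v) assigned a value val_{s,t}(u,v) ∈ [0,1] for each (s,t) ∈ P, with total val(u,v) = ∑_{(s,t)} val_{s,t}(u,v) > 0, and suppose that in a round selecting pair (s,t), an event 'separate (u,v)' occurs independently with probability at least val_{s,t}(u,v). Then the probability that (u,v) is not separated within the first i rounds is at most e^{-i·val(u,v)/N}. -/

import Mathlib

/-!
Splitting the event of no separation according to the selected injective sequence `g`, its
probability is at most the average of `∏ₜ (1 - val (g t))` over all injective `g : Fin i → P`.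
That average is `i! · eᵢ(1 - val) / N.descFactorial i`, with `eᵢ` the elementary symmetric
function, and Maclaurin's inequality `eᵢ(b) ≤ (N choose i) · (mean b)ⁱ` bounds it by
`(1 - val(u,v)/N)ⁱ ≤ exp(-i · val(u,v)/N)`.
Maclaurin's inequality follows by induction on the number of variables, the inductive step
being AM-GM for `k` copies of one number and one copy of another.
-/

open MeasureTheory Finset

lemma pow_mul_le_mean_pow_succ {x y : ℝ} (k : ℕ) (hx : 0 ≤ x) (hy : 0 ≤ y) :
    x ^ k * y ≤ ((k * x + y) / (k + 1)) ^ (k + 1) := by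
  set a := (k * x + y) / (k + 1) with ha
  have ha0 : 0 ≤ a := by positivity
  rcases hx.eq_or_lt with rfl | hx
  · rcases k with _ | k
    · simp [ha]
    · simp only [zero_pow (Nat.succ_ne_zero k), zero_mul]; positivity
  · have hy : y = x * (1 + (k + 1) * (a / x - 1)) := by
      rw [ha]; field_simp; ring
    calc x ^ k * y = x ^ (k + 1) * (1 + (k + 1 : ℕ) * (a / x - 1)) := by
          rw [hy]; push_cast; ring
      _ ≤ x ^ (k + 1) * (a / x) ^ (k + 1) := by
          gcongr
          exact one_add_mul_sub_le_pow (by linarith [div_nonneg ha0 hx.le]) _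
      _ = a ^ (k + 1) := by rw [← mul_pow, mul_div_cancel₀ _ hx.ne']

/-- The inductive step of Maclaurin's inequality: `n` variables of mean `m` together with one
more variable `a`. -/
lemma choose_mul_pow_add_le {m a : ℝ} (hm : 0 ≤ m) (ha : 0 ≤ a) (n k : ℕ) :
    n.choose (k + 1) * m ^ (k + 1) + a * (n.choose k * m ^ k)
      ≤ (n + 1).choose (k + 1) * ((n * m + a) / (n + 1)) ^ (k + 1) := by
  rcases lt_or_ge n k with hnk | hkn
  · rw [Nat.choose_eq_zero_of_lt hnk, Nat.choose_eq_zero_of_lt (hnk.trans k.lt_succ_self)]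
    simp only [Nat.cast_zero, zero_mul, mul_zero, add_zero]
    positivity
  have hchoose : (n.choose (k + 1) : ℝ) * (k + 1) = n.choose k * (n - k) := by
    exact_mod_cast Nat.choose_succ_right_eq n k
  have hchoose' : ((n + 1).choose (k + 1) : ℝ) * (k + 1) = (n + 1) * n.choose k := by
    exact_mod_cast (Nat.add_one_mul_choose_eq n k).symm
  have hkn' : (k : ℝ) ≤ n := by exact_mod_cast hkn
  have hamgm := pow_mul_le_mean_pow_succ k (x := (n + 1) * m) (y := (n - k) * m + (k + 1) * a)
    (by positivity) (add_nonneg (mul_nonneg (sub_nonneg.2 hkn') hm) (by positivity))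
  have hmean : (k * ((n + 1) * m) + ((n - k) * m + (k + 1) * a)) / (k + 1) = n * m + a := by
    field_simp; ring
  rw [hmean, mul_pow] at hamgm
  rw [← mul_le_mul_iff_of_pos_right (by positivity : (0 : ℝ) < (k + 1) * (n + 1) ^ k)]
  calc _ = n.choose k * ((n + 1) ^ k * m ^ k * ((n - k) * m + (k + 1) * a)) := by
        linear_combination (m ^ (k + 1) * (n + 1) ^ k) * hchoose
    _ ≤ n.choose k * (n * m + a) ^ (k + 1) := by gcongr
    _ = _ := by
        rw [div_pow, pow_succ (n + 1 : ℝ) k]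
        field_simp
        linear_combination (-(n * m + a) ^ (k + 1)) * hchoose'

namespace Multiset

lemma esymm_cons_succ {R : Type*} [CommSemiring R] (a : R) (s : Multiset R) (k : ℕ) :
    (a ::ₘ s).esymm (k + 1) = s.esymm (k + 1) + a * s.esymm k := by
  simp [esymm, powersetCard_cons, sum_map_mul_left]

theorem esymm_le_choose_mul_mean_pow (s : Multiset ℝ) (hs : ∀ x ∈ s, 0 ≤ x) (k : ℕ) :
    s.esymm k ≤ (card s).choose k * (s.sum / card s) ^ k := by
  induction s using Multiset.induction_on generalizing k with
  | empty => cases k <;> simp [esymm, powersetCard_zero_right]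
  | cons a s ih =>
    rcases k with _ | k
    · simp [esymm]
    have ha : 0 ≤ a := hs a (mem_cons_self a s)
    have hs' : ∀ x ∈ s, 0 ≤ x := fun x hx => hs x (mem_cons_of_mem hx)
    have hsum : s.sum = card s * (s.sum / card s) := by
      rcases eq_or_ne (card s) 0 with h | h
      · simp [card_eq_zero.1 h]
      · rw [mul_div_cancel₀ _ (Nat.cast_ne_zero.2 h)]
    rw [esymm_cons_succ, card_cons, sum_cons, add_comm a, hsum, Nat.cast_succ]
    calc _ ≤ (card s).choose (k + 1) * (s.sum / card s) ^ (k + 1)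
          + a * ((card s).choose k * (s.sum / card s) ^ k) := by
          gcongr
          · exact ih hs' _
          · exact ih hs' _
      _ ≤ _ := choose_mul_pow_add_le (div_nonneg (sum_nonneg hs') (Nat.cast_nonneg _)) ha _ _

end Multiset

section Embedding

variable {ι : Type*}

noncomputable def Function.Embedding.equivOfMapUnivEq {k : ℕ} (s : Finset ι) :
    {f : Fin k ↪ ι // univ.map f = s} ≃ (Fin k ≃ s) where
  toFun f := Equiv.ofBijective
    (fun t => ⟨f.1 t, by obtain ⟨f, rfl⟩ := f; exact mem_map_of_mem _ (mem_univ t)⟩)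
    ⟨fun _ _ h => f.1.injective (congrArg Subtype.val h), fun x => by
      obtain ⟨t, -, ht⟩ := mem_map.1 (f.2.symm ▸ x.2 : x.1 ∈ univ.map f.1)
      exact ⟨t, Subtype.ext ht⟩⟩
  invFun e := ⟨e.toEmbedding.trans (Function.Embedding.subtype _), by
    ext x
    simp only [mem_map, mem_univ, true_and, Function.Embedding.trans_apply,
      Equiv.coe_toEmbedding, Function.Embedding.coe_subtype]
    exact ⟨fun ⟨t, ht⟩ => ht ▸ (e t).2, fun hx => ⟨e.symm ⟨x, hx⟩, by simp⟩⟩⟩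
  left_inv _ := rfl
  right_inv _ := by ext; rfl

variable [Fintype ι] [DecidableEq ι]

lemma card_embedding_map_univ_eq {k : ℕ} {s : Finset ι} (hs : #s = k) :
    #{f : Fin k ↪ ι | univ.map f = s} = k.factorial := by
  rw [← Fintype.card_subtype, Fintype.card_congr (Function.Embedding.equivOfMapUnivEq s),
    Fintype.card_equiv (s.equivFinOfCardEq hs).symm, Fintype.card_fin]

lemma sum_embedding_prod_eq_factorial_mul_esymm {R : Type*} [CommSemiring R] (b : ι → R)
    (k : ℕ) : ∑ f : Fin k ↪ ι, ∏ t, b (f t) = k.factorial * (univ.val.map b).esymm k := by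
  rw [esymm_map_val, mul_sum]
  calc ∑ f : Fin k ↪ ι, ∏ t, b (f t) = ∑ f : Fin k ↪ ι, ∏ x ∈ univ.map f, b x := by
        simp only [prod_map]
    _ = ∑ s ∈ powersetCard k univ, ∑ f with univ.map f = s, ∏ x ∈ univ.map f, b x :=
        (sum_fiberwise_of_maps_to (g := fun f : Fin k ↪ ι => univ.map f) (fun f _ =>
          mem_powersetCard.2 ⟨subset_univ _, by rw [card_map, card_fin]⟩) _).symm
    _ = ∑ s ∈ powersetCard k univ, ∑ f with univ.map f = s, ∏ x ∈ s, b x :=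
        sum_congr rfl fun s _ => sum_congr rfl fun f hf => by rw [(mem_filter.1 hf).2]
    _ = _ := by
        refine sum_congr rfl fun s hs => ?_
        rw [sum_const, card_embedding_map_univ_eq (mem_powersetCard.1 hs).2, nsmul_eq_mul]

theorem sum_embedding_prod_le_descFactorial_mul_mean_pow (b : ι → ℝ) (hb : ∀ x, 0 ≤ b x)
    (k : ℕ) :
    ∑ f : Fin k ↪ ι, ∏ t, b (f t)
      ≤ (Fintype.card ι).descFactorial k * ((∑ x, b x) / Fintype.card ι) ^ k := by
  have h := (univ.val.map b).esymm_le_choose_mul_mean_pow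
    (fun x hx => by obtain ⟨y, -, rfl⟩ := Multiset.mem_map.1 hx; exact hb y) k
  rw [Multiset.card_map, card_val, card_univ, sum_map_val] at h
  rw [sum_embedding_prod_eq_factorial_mul_esymm, Nat.descFactorial_eq_factorial_mul_choose,
    Nat.cast_mul, mul_assoc]
  gcongr

end Embedding

lemma mean_one_sub_pow_le_exp {ι : Type*} [Fintype ι] (v : ι → ℝ) (hv : ∀ x, v x ≤ 1) (k : ℕ) :
    ((∑ x, (1 - v x)) / Fintype.card ι) ^ k
      ≤ Real.exp (-k * (∑ x, v x) / Fintype.card ι) := by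
  have hbase : (∑ x, (1 - v x)) / Fintype.card ι ≤ Real.exp (-((∑ x, v x) / Fintype.card ι)) := by
    rcases eq_or_ne (Fintype.card ι : ℝ) 0 with hn | hn
    · rw [hn, div_zero]; positivity
    · rw [sum_sub_distrib, sum_const, card_univ, nsmul_eq_mul, mul_one, sub_div, div_self hn]
      exact Real.one_sub_le_exp_neg _
  calc _ ≤ Real.exp (-((∑ x, v x) / Fintype.card ι)) ^ k :=
        pow_le_pow_left₀ (div_nonneg (sum_nonneg fun x _ => sub_nonneg.2 (hv x))
          (Nat.cast_nonneg _)) hbase k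
    _ = _ := by rw [← Real.exp_nat_mul]; ring_nf

theorem stmt10_general {Ω P : Type*} [Fintype P]
    [MeasurableSpace Ω] (μ : Measure Ω) [IsProbabilityMeasure μ]
    (N i : ℕ) (hN : Fintype.card P = N)
    (val : P → ℝ) (hval1 : ∀ p, val p ≤ 1)
    (sel : Fin i → Ω → P) (Sep : Fin i → Set Ω)
    (hinj : ∀ ω, Function.Injective fun t => sel t ω)
    (hunif : ∀ g : Fin i → P, Function.Injective g →
      μ {ω | ∀ t, sel t ω = g t} = 1 / (N.descFactorial i : ENNReal))
    (hsep : ∀ g : Fin i → P, Function.Injective g →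
      μ ({ω | ∀ t, sel t ω = g t} ∩ ⋂ t, (Sep t)ᶜ)
        ≤ μ {ω | ∀ t, sel t ω = g t} * ENNReal.ofReal (∏ t, (1 - val (g t)))) :
    μ (⋂ t, (Sep t)ᶜ) ≤ ENNReal.ofReal (Real.exp (-(i : ℝ) * (∑ p, val p) / N)) := by
  classical
  subst hN
  set K := ⋂ t, (Sep t)ᶜ
  set d : ENNReal := ((Fintype.card P).descFactorial i : ENNReal)
  have hcover : K ⊆ ⋃ f : Fin i ↪ P, {ω | ∀ t, sel t ω = f t} ∩ K := fun ω hω =>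
    Set.mem_iUnion.2 ⟨⟨fun t => sel t ω, hinj ω⟩, fun _ => rfl, hω⟩
  calc μ K ≤ ∑ f : Fin i ↪ P, μ ({ω | ∀ t, sel t ω = f t} ∩ K) :=
        (measure_mono hcover).trans (measure_iUnion_fintype_le _ _)
    _ ≤ ∑ f : Fin i ↪ P, d⁻¹ * ENNReal.ofReal (∏ t, (1 - val (f t))) :=
        sum_le_sum fun f _ => (hsep f f.injective).trans_eq (by rw [hunif f f.injective, one_div])
    _ = d⁻¹ * ENNReal.ofReal (∑ f : Fin i ↪ P, ∏ t, (1 - val (f t))) := by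
        rw [ENNReal.ofReal_sum_of_nonneg fun f _ => prod_nonneg fun t _ => sub_nonneg.2 (hval1 _),
          mul_sum]
    _ ≤ d⁻¹ * ENNReal.ofReal (d.toReal * ((∑ p, (1 - val p)) / Fintype.card P) ^ i) := by
        gcongr
        exact sum_embedding_prod_le_descFactorial_mul_mean_pow _ (fun p => sub_nonneg.2 (hval1 p)) i
    _ ≤ ENNReal.ofReal (((∑ p, (1 - val p)) / Fintype.card P) ^ i) := by
        rw [ENNReal.ofReal_mul ENNReal.toReal_nonneg, ENNReal.ofReal_toReal (by simp [d]),
          ← mul_assoc]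
        exact mul_le_of_le_one_left zero_le (ENNReal.inv_mul_le_one d)
    _ ≤ _ := ENNReal.ofReal_le_ofReal (mean_one_sub_pow_le_exp val hval1 i)

/-- Concentration over random demand-pair orderings: if pairs are selected uniformly without
replacement and, conditionally on the selection `g`, separation in round `t` occurs with
probability at least `val (g t)`, then the probability that no separation occurs in the first
`i` rounds is at most `exp(-i·val(u,v)/N)`. -/
theorem stmt10 {Ω P : Type*} [Fintype P] [DecidableEq P]
    [MeasurableSpace Ω] (μ : Measure Ω) [IsProbabilityMeasure μ]
    (N i : ℕ) (hN : Fintype.card P = N) (hi : i ≤ N)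
    (val : P → ℝ) (hval0 : ∀ p, 0 ≤ val p) (hval1 : ∀ p, val p ≤ 1)
    (hpos : 0 < ∑ p, val p)
    (sel : Fin i → Ω → P) (Sep : Fin i → Set Ω)
    (hinj : ∀ ω, Function.Injective fun t => sel t ω)
    (hunif : ∀ g : Fin i → P, Function.Injective g →
      μ {ω | ∀ t, sel t ω = g t} = 1 / (N.descFactorial i : ENNReal))
    (hsep : ∀ g : Fin i → P, Function.Injective g →
      μ ({ω | ∀ t, sel t ω = g t} ∩ ⋂ t, (Sep t)ᶜ)
        ≤ μ {ω | ∀ t, sel t ω = g t} * ENNReal.ofReal (∏ t, (1 - val (g t)))) :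
    μ (⋂ t, (Sep t)ᶜ) ≤ ENNReal.ofReal (Real.exp (-(i : ℝ) * (∑ p, val p) / N)) :=
  stmt10_general μ N i hN val hval1 sel Sep hinj hunif hsep
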